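/- arXiv:1901.11453 — 2 statements merged into one kernel-verified Lean document; each statement's English description precedes it below -/
import Mathlib

section
/- Let S, T, U be finite real-valued sequences with |S| ≤ |T| ≤ |U|, and let d₂(S,T) := min over valid offsets j of the Euclidean distance between S and the window T[j..j+|S|-1]. Then d₂(S,U) ≤ d₂(S,T) + d₂(T,U) (the triangle inequality holds along the length chain). -/
/-- Windowed Euclidean distance between a sequence of length `n` (given by `S`)
and a sequence of length `m` (given by `T`), assuming `n ≤ m`. -/
noncomputable def d2 (n m : ℕ) (S T : ℕ → ℝ) : ℝ :=
  (Finset.range (m - n + 1)).inf' (Finset.nonempty_range_iff.mpr (Nat.succ_ne_zero _))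
    (fun j => Real.sqrt (∑ i ∈ Finset.range n, (S i - T (i + j)) ^ 2))

/-! If `S` is best matched by `T_{j₁}^n` and `T` by `U_{j₂}^m`, compare `S` with `U_{j₁+j₂}^n`:
by the Euclidean triangle inequality through `T_{j₁}^n`, its distance is at most
`d₂(S, T) + d₂(T_{j₁}^n, U_{j₁+j₂}^n)`, and the last term is the distance between matching
subwindows of `T` and `U_{j₂}^m`, hence at most `d₂(T, U)`. -/

open Finset

theorem Finset.sqrt_sum_sq_sub_le {ι : Type*} (s : Finset ι) (f g h : ι → ℝ) :
    √(∑ i ∈ s, (f i - h i) ^ 2) ≤ √(∑ i ∈ s, (f i - g i) ^ 2) + √(∑ i ∈ s, (g i - h i) ^ 2) := by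
  let e : (ι → ℝ) → EuclideanSpace ℝ s := fun f => WithLp.toLp 2 fun i => f i
  have dist_e : ∀ f g, dist (e f) (e g) = √(∑ i ∈ s, (f i - g i) ^ 2) := fun f g => by
    simp [e, EuclideanSpace.dist_eq, Real.dist_eq, sq_abs,
      Finset.sum_attach s fun i => (f i - g i) ^ 2]
  simpa only [dist_e] using dist_triangle (e f) (e g) (e h)

theorem Finset.sum_range_add_le_sum_range {M : Type*} [AddCommMonoid M] [PartialOrder M]
    [IsOrderedAddMonoid M] {f : ℕ → M} (hf : ∀ i, 0 ≤ f i) {n m j : ℕ} (h : j + n ≤ m) :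
    ∑ i ∈ range n, f (i + j) ≤ ∑ i ∈ range m, f i := by
  calc ∑ i ∈ range n, f (i + j) = ∑ i ∈ Ico j (j + n), f i := by
        rw [sum_Ico_eq_sum_range, Nat.add_sub_cancel_left]
        simp only [add_comm]
    _ ≤ ∑ i ∈ range m, f i :=
        sum_le_sum_of_subset_of_nonneg
          (fun i hi => by simp only [mem_Ico, mem_range] at hi ⊢; omega) fun i _ _ => hf i

/-- The distance from `S` to the window `T_j^n`. -/
noncomputable def windowDist (n : ℕ) (S T : ℕ → ℝ) (j : ℕ) : ℝ :=
  √(∑ i ∈ range n, (S i - T (i + j)) ^ 2)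

theorem d2_le_windowDist {n m j : ℕ} {S T : ℕ → ℝ} (hj : j ≤ m - n) :
    d2 n m S T ≤ windowDist n S T j :=
  inf'_le _ (mem_range.mpr (Nat.lt_succ_of_le hj))

theorem exists_windowDist_eq_d2 (n m : ℕ) (S T : ℕ → ℝ) :
    ∃ j ≤ m - n, windowDist n S T j = d2 n m S T := by
  obtain ⟨j, hj, hmin⟩ := exists_mem_eq_inf' (nonempty_range_iff.mpr (Nat.succ_ne_zero (m - n)))
    (windowDist n S T)
  exact ⟨j, Nat.lt_succ_iff.mp (mem_range.mp hj), hmin.symm⟩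

theorem windowDist_add_le {n m j₁ j₂ : ℕ} (h : j₁ + n ≤ m) (S T U : ℕ → ℝ) :
    windowDist n S U (j₁ + j₂) ≤ windowDist n S T j₁ + windowDist m T U j₂ := by
  have subwindow :
      √(∑ i ∈ range n, (T (i + j₁) - U (i + (j₁ + j₂))) ^ 2) ≤ windowDist m T U j₂ :=
    Real.sqrt_le_sqrt <| by
      simpa only [add_assoc] using
        sum_range_add_le_sum_range (f := fun i => (T i - U (i + j₂)) ^ 2) (fun _ => sq_nonneg _) h
  calc windowDist n S U (j₁ + j₂)
      ≤ windowDist n S T j₁ + √(∑ i ∈ range n, (T (i + j₁) - U (i + (j₁ + j₂))) ^ 2) :=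
        sqrt_sum_sq_sub_le _ _ _ _
    _ ≤ windowDist n S T j₁ + windowDist m T U j₂ := add_le_add_right subwindow _

theorem d2_chain_triangle (n m k : ℕ) (hnm : n ≤ m) (hmk : m ≤ k)
    (S T U : ℕ → ℝ) :
    d2 n k S U ≤ d2 n m S T + d2 m k T U := by
  obtain ⟨j₁, hj₁, hST⟩ := exists_windowDist_eq_d2 n m S T
  obtain ⟨j₂, hj₂, hTU⟩ := exists_windowDist_eq_d2 m k T U
  calc d2 n k S U ≤ windowDist n S U (j₁ + j₂) := d2_le_windowDist (by omega)
    _ ≤ windowDist n S T j₁ + windowDist m T U j₂ := windowDist_add_le (by omega) S T U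
    _ = d2 n m S T + d2 m k T U := by rw [hST, hTU]
end

section
/- Correctness of the ε-range query pruning condition: in a metric subset space (M, ⊑, d), if an object O_j satisfies O_j ⊑ Q and d(O_j, Q) ≤ r(Q), and O_j lies in the covered subtree of routing object O_r (meaning O_r ⊑ O_j and d(O_r, O_j) ≤ r(O_r)), then neither pruning condition fires: d(O_r, Q) ≤ r(Q) + r(O_r), and for any parent O_p with O_p ⊑ O_r, d(O_p, Q) ≤ r(Q) + r(O_r) + d(O_p, O_r). -/
structure IsMetricSubsetSpace {M : Type*} (le : M → M → Prop) (d : M → M → ℝ) : Prop where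
  refl : ∀ x, le x x
  total : ∀ x y, le x y ∨ le y x
  trans : ∀ x y z, le x y → le y z → le x z
  nonneg : ∀ x y, 0 ≤ d x y
  triangle : ∀ x y z, le x y → le y z → d x z ≤ d x y + d y z
  eq_zero : ∀ x y, d x y = 0 ↔ x = y

theorem range_query_no_false_prune {M : Type*} (le : M → M → Prop) (d : M → M → ℝ)
    (h : IsMetricSubsetSpace le d)
    (Or Oj Q : M) (rQ rOr : ℝ) (hrQ : 0 ≤ rQ) (hrOr : 0 ≤ rOr)
    (hOjQ : le Oj Q) (hres : d Oj Q ≤ rQ)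
    (hOrOj : le Or Oj) (hcov : d Or Oj ≤ rOr) :
    d Or Q ≤ rQ + rOr ∧
      ∀ Op : M, le Op Or → d Op Q ≤ rQ + rOr + d Op Or := by
  have h1 : d Or Q ≤ d Or Oj + d Oj Q := h.triangle _ _ _ hOrOj hOjQ
  constructor
  · linarith
  · intro Op hOp
    have h2 : d Op Q ≤ d Op Or + d Or Q := h.triangle _ _ _ hOp (h.trans _ _ _ hOrOj hOjQ)
    linarith
end
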